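/- (a) For all real t, x with sin(x−t) ≠ 0 and sin(x+t) ≠ 0 one has cot(x−t) − cot(x+t) = 2·sin(2t)/(cos(2t) − cos(2x)). (b) On the open set Ω = {(t,x) ∈ ℝ² : cos(2t) ≠ cos(2x) and sin(2t) ≠ 0}, the function u(t,x) = 2·sin(2t)/(cos(2t) − cos(2x)) is nonvanishing and satisfies the fast diffusion equation u_t = ∂/∂x (u_x / u). -/

import Mathlib

/-- Partial derivative with respect to the first variable (time). -/
noncomputable def pt (u : ℝ × ℝ → ℝ) (p : ℝ × ℝ) : ℝ :=
  deriv (fun s => u (s, p.2)) p.1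

/-- Partial derivative with respect to the second variable (space). -/
noncomputable def px (u : ℝ × ℝ → ℝ) (p : ℝ × ℝ) : ℝ :=
  deriv (fun y => u (p.1, y)) p.2

/-!
With `a = 2t`, `b = 2x` the solution is `u = 2 f(a, b)` where `f(a, b) = sin a / (cos a - cos b)`,
and its flux `u_x / u`, the logarithmic derivative of `1 / (cos a - cos b)` in `x`, is `2 f(b, a)`.
So the equation reduces to `∂f/∂a (a, b) = ∂f/∂a (b, a)`, which holds because
`∂f/∂a (a, b) = (1 - cos a cos b) / (cos a - cos b)²` is symmetric in `a` and `b`.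
-/

open Real Filter Topology

theorem cot_sub_cot {x y : ℝ} (hx : sin x ≠ 0) (hy : sin y ≠ 0) :
    cot x - cot y = sin (y - x) / (sin x * sin y) := by
  rw [cot_eq_cos_div_sin, cot_eq_cos_div_sin, sin_sub]
  field_simp

theorem cos_two_mul_sub_cos_two_mul (t x : ℝ) :
    cos (2 * t) - cos (2 * x) = 2 * (sin (x - t) * sin (x + t)) := by
  rw [cos_sub_cos, show (2 * t - 2 * x) / 2 = -(x - t) by ring,
    show (2 * t + 2 * x) / 2 = x + t by ring, sin_neg]
  ring

theorem cot_sub_sub_cot_add {t x : ℝ} (h₁ : sin (x - t) ≠ 0) (h₂ : sin (x + t) ≠ 0) :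
    cot (x - t) - cot (x + t) = 2 * sin (2 * t) / (cos (2 * t) - cos (2 * x)) := by
  rw [cot_sub_cot h₁ h₂, cos_two_mul_sub_cos_two_mul, show x + t - (x - t) = 2 * t by ring,
    mul_div_mul_left _ _ two_ne_zero]

theorem hasDerivAt_sin_div_cos_sub_cos {s b : ℝ} (h : cos s ≠ cos b) :
    HasDerivAt (fun s => sin s / (cos s - cos b))
      ((1 - cos s * cos b) / (cos s - cos b) ^ 2) s :=
  ((hasDerivAt_sin s).div ((hasDerivAt_cos s).sub_const (cos b)) (sub_ne_zero.2 h)).congr_deriv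
    (by congr 1; linear_combination sin_sq_add_cos_sq s)

theorem hasDerivAt_two_mul (s : ℝ) : HasDerivAt (fun s : ℝ => 2 * s) 2 s := by
  simpa using (hasDerivAt_id s).const_mul (2 : ℝ)

theorem hasDerivAt_two_sin_two_mul_div {s b : ℝ} (h : cos (2 * s) ≠ cos b) :
    HasDerivAt (fun s => 2 * sin (2 * s) / (cos (2 * s) - cos b))
      (4 * (1 - cos (2 * s) * cos b) / (cos (2 * s) - cos b) ^ 2) s := by
  have := ((hasDerivAt_sin_div_cos_sub_cos h).comp s (hasDerivAt_two_mul s)).const_mul 2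
  simp only [Function.comp_def, ← mul_div_assoc] at this
  exact this.congr_deriv (by ring)

theorem logDeriv_const_div_cos_sub_cos_two_mul {a c y : ℝ} (hc : c ≠ 0)
    (h : cos a ≠ cos (2 * y)) :
    logDeriv (fun y => c / (cos a - cos (2 * y))) y = 2 * sin (2 * y) / (cos (2 * y) - cos a) := by
  have hden : HasDerivAt (fun y => cos a - cos (2 * y)) (2 * sin (2 * y)) y :=
    (((hasDerivAt_cos (2 * y)).comp y (hasDerivAt_two_mul y)).const_sub (cos a)).congr_deriv
      (by ring)
  rw [logDeriv_div (f := fun _ => c) (g := fun y => cos a - cos (2 * y)) y hc (sub_ne_zero.2 h)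
      (differentiableAt_const c) hden.differentiableAt,
    logDeriv_const, logDeriv_apply, hden.deriv, Pi.zero_apply, zero_sub, ← div_neg, neg_sub]

theorem fast_diffusion_solution_cot
    (u : ℝ × ℝ → ℝ)
    (hu : u = fun p => 2 * Real.sin (2 * p.1) / (Real.cos (2 * p.1) - Real.cos (2 * p.2)))
    (Ω : Set (ℝ × ℝ))
    (hΩ : Ω = {p : ℝ × ℝ | Real.cos (2 * p.1) ≠ Real.cos (2 * p.2) ∧
      Real.sin (2 * p.1) ≠ 0}) :
    (∀ t x : ℝ, Real.sin (x - t) ≠ 0 → Real.sin (x + t) ≠ 0 →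
      Real.cot (x - t) - Real.cot (x + t) =
        2 * Real.sin (2 * t) / (Real.cos (2 * t) - Real.cos (2 * x))) ∧
    (∀ p ∈ Ω, u p ≠ 0 ∧ pt u p = px (fun q => px u q / u q) p) := by
  subst hu hΩ
  refine ⟨fun t x => cot_sub_sub_cot_add, ?_⟩
  rintro ⟨t, x⟩ ⟨hcos, hsin⟩
  have hc : 2 * sin (2 * t) ≠ 0 := mul_ne_zero two_ne_zero hsin
  refine ⟨div_ne_zero hc (sub_ne_zero.2 hcos), ?_⟩
  have hflux : (fun y => deriv (fun y => 2 * sin (2 * t) / (cos (2 * t) - cos (2 * y))) y /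
        (2 * sin (2 * t) / (cos (2 * t) - cos (2 * y)))) =ᶠ[𝓝 x]
      fun y => 2 * sin (2 * y) / (cos (2 * y) - cos (2 * t)) := by
    filter_upwards [(continuous_cos.comp (continuous_const_mul 2)).continuousAt.eventually_ne
      (Ne.symm hcos)] with y hy
    exact logDeriv_const_div_cos_sub_cos_two_mul hc (Ne.symm hy)
  dsimp only [pt, px]
  rw [hflux.deriv_eq, (hasDerivAt_two_sin_two_mul_div hcos).deriv,
    (hasDerivAt_two_sin_two_mul_div (Ne.symm hcos)).deriv]
  ring
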